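/- Let (X,d,μ) be a space of homogeneous type with upper dimension γ, R an inhomogeneous Calderón–Zygmund operator of order (ν,s), and γ/(γ+min{ν,s}) < p ≤ 1. Then there exists C > 0, independent of the atom, such that for every local (p,2)-atom a one has ‖Ra‖_{L^p(X)} ≤ C. -/

import Mathlib

open MeasureTheory ENNReal Filter Topology

noncomputable section

variable {X : Type*}

/-- Quasi-metric ball. -/
def hball (d : X → X → ℝ) (x : X) (r : ℝ) : Set X := {y | d x y < r}

/-- `(X,d,μ)` is a space of homogeneous type with quasi-triangle constant `A₀`,
doubling constant `A'` and upper dimension `γ`. -/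
structure IsHomType [MeasurableSpace X] (d : X → X → ℝ) (μ : Measure X)
    (A₀ A' γ : ℝ) : Prop where
  A0_ge : 1 ≤ A₀
  A'_pos : 0 < A'
  gamma_pos : 0 < γ
  nonneg : ∀ x y, 0 ≤ d x y
  eq_zero : ∀ x y, d x y = 0 ↔ x = y
  symm : ∀ x y, d x y = d y x
  tri : ∀ x y z, d x y ≤ A₀ * (d x z + d z y)
  meas : ∀ x r, MeasurableSet (hball d x r)
  pos : ∀ x r, 0 < r → 0 < μ (hball d x r)
  fin : ∀ x r, μ (hball d x r) < ⊤
  doubling : ∀ x r lam, 1 ≤ lam →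
    μ (hball d x (lam * r)) ≤ ENNReal.ofReal (A' * lam ^ γ) * μ (hball d x r)

/-- `L` is an upper bound for all the local Lipschitz functionals `𝔑^B_{α,T}(φ)`,
i.e. an upper bound for the `ℓ_{α,T}` norm of `φ`. -/
def LipBound [MeasurableSpace X] (d : X → X → ℝ) (μ : Measure X) (α T : ℝ)
    (φ : X → ℝ) (L : ℝ) : Prop :=
  ∀ x r, 0 < r →
    (r < T → ∀ y ∈ hball d x r, ∀ z ∈ hball d x r,
      |φ y - φ z| ≤ L * (μ (hball d x r)).toReal ^ α) ∧
    (T ≤ r → ∀ y ∈ hball d x r, |φ y| ≤ L * (μ (hball d x r)).toReal ^ α)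

/-- A `(p,q,T)`-approximate atom. -/
def IsApproxAtom [MeasurableSpace X] (d : X → X → ℝ) (μ : Measure X)
    (p : ℝ) (q : ℝ≥0∞) (T : ℝ) (a : X → ℝ) : Prop :=
  ∃ (x_B : X) (r_B : ℝ), 0 < r_B ∧
    (∀ x, a x ≠ 0 → x ∈ hball d x_B r_B) ∧
    eLpNorm a q μ ≤ μ (hball d x_B r_B) ^ (1/q.toReal - 1/p) ∧
    Integrable a μ ∧
    |∫ x, a x ∂μ| ≤ (μ (hball d x_B T)).toReal ^ (1 - 1/p)

/-!
On the dilated ball `B* = B(x_B, 2A₀r_B)`, Hölder's inequality with exponents `2/p` and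
`2/(2-p)` together with the `L²` bound of `R` gives `∫_{B*} |Ra|^p ≲ ‖a‖₂^p μ(B)^{1-p/2} ≲ 1`.
Off `B*` we have `Ra x = ∫ K(x,y) a(y) dμ(y)`. If `r_B < T`, the cancellation of `a` lets us
replace `K(x,y)` by `K(x,y) - K(x,x_B)` and use the Hölder regularity of `K`; otherwise
`d(x,y) ≥ r_B ≥ T` and the size bound `V(x,y)⁻¹ d(x,y)^{-ν}` suffices. Either way, on the
annulus `2^{k+1}B* \ 2^kB*` one gets `|Ra| ≲ 2^{-k min(ν,s)} μ(2^kB*)⁻¹ ‖a‖₁`, with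
`‖a‖₁ ≤ μ(B)^{1-1/p}` by Cauchy–Schwarz. The doubling property then bounds the `p`-th power
integral over the `k`-th annulus by a multiple of `2^{-k(p min(ν,s) - γ(1-p))}`, a geometric
series precisely because `p > γ/(γ + min(ν,s))`.
-/

theorem lintegral_enorm_rpow_le_eLpNorm_two_mul {E : Type*} [NormedAddCommGroup E]
    [MeasurableSpace X] (μ : Measure X) (f : X → E) (S : Set X) {p : ℝ} (hp : 0 < p)
    (hp2 : p < 2) :
    ∫⁻ x in S, ‖f x‖ₑ ^ p ∂μ ≤ eLpNorm f 2 μ ^ p * μ S ^ (1 - p / 2) := by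
  -- `f` need not be measurable: apply Hölder to a measurable minorant with the same integral
  obtain ⟨g, hg, hgf, hfg⟩ := exists_measurable_le_lintegral_eq (μ.restrict S)
    fun x => ‖f x‖ₑ ^ p
  have hconj : Real.HolderConjugate (2 / p) (2 / (2 - p)) :=
    Real.holderConjugate_iff.mpr ⟨by rw [one_lt_div hp]; linarith, by field_simp; ring⟩
  have holder := ENNReal.lintegral_mul_le_Lp_mul_Lq (μ.restrict S) hconj hg.aemeasurable
    (aemeasurable_const (b := (1 : ℝ≥0∞)))
  simp only [Pi.mul_apply, mul_one, ENNReal.one_rpow, lintegral_one,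
    Measure.restrict_apply_univ, one_div_div] at holder
  have hg2 : ∫⁻ x in S, g x ^ (2 / p) ∂μ ≤ ∫⁻ x, ‖f x‖ₑ ^ (2 : ℝ) ∂μ := by
    refine (lintegral_mono fun x => ?_).trans (lintegral_mono' Measure.restrict_le_self le_rfl)
    calc g x ^ (2 / p) ≤ (‖f x‖ₑ ^ p) ^ (2 / p) := by gcongr; exact hgf x
      _ = ‖f x‖ₑ ^ (2 : ℝ) := by rw [← ENNReal.rpow_mul]; field_simp
  have hf2 : eLpNorm f 2 μ ^ p = (∫⁻ x, ‖f x‖ₑ ^ (2 : ℝ) ∂μ) ^ (p / 2) := by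
    rw [eLpNorm_eq_lintegral_rpow_enorm_toReal (by norm_num) (by norm_num), ← ENNReal.rpow_mul]
    norm_num
    ring_nf
  calc ∫⁻ x in S, ‖f x‖ₑ ^ p ∂μ = ∫⁻ x in S, g x ∂μ := hfg
    _ ≤ (∫⁻ x in S, g x ^ (2 / p) ∂μ) ^ (p / 2) * μ S ^ ((2 - p) / 2) := holder
    _ ≤ eLpNorm f 2 μ ^ p * μ S ^ (1 - p / 2) := by
      rw [hf2, show (2 - p) / 2 = 1 - p / 2 by ring]
      gcongr

theorem eLpNorm_one_le_eLpNorm_two_mul {E : Type*} [NormedAddCommGroup E]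
    [MeasurableSpace X] {μ : Measure X} {f : X → E} {S : Set X}
    (hf : AEStronglyMeasurable f μ) (hS : ∀ x, f x ≠ 0 → x ∈ S) :
    eLpNorm f 1 μ ≤ eLpNorm f 2 μ * μ S ^ (1 / 2 : ℝ) := by
  have hsupp : Function.support f ⊆ S := fun x hx => hS x hx
  have h := eLpNorm_le_eLpNorm_mul_rpow_measure_univ (μ := μ.restrict S) (p := 1) (q := 2)
    one_le_two hf.restrict
  rw [eLpNorm_restrict_eq_of_support_subset hsupp, eLpNorm_restrict_eq_of_support_subset hsupp,
    Measure.restrict_apply_univ] at h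
  convert h using 3
  norm_num

theorem abs_integral_mul_le_of_abs_le [MeasurableSpace X] {μ : Measure X} {a g : X → ℝ}
    {M : ℝ} (ha : Integrable a μ) (hg : ∀ y, a y ≠ 0 → |g y| ≤ M) :
    |∫ y, g y * a y ∂μ| ≤ M * ∫ y, |a y| ∂μ := by
  have hga : ∀ y, ‖g y * a y‖ ≤ M * |a y| := fun y => by
    rcases eq_or_ne (a y) 0 with hy | hy
    · simp [hy]
    · rw [Real.norm_eq_abs, abs_mul]; exact mul_le_mul_of_nonneg_right (hg y hy) (abs_nonneg _)
  calc |∫ y, g y * a y ∂μ| = ‖∫ y, g y * a y ∂μ‖ := (Real.norm_eq_abs _).symm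
    _ ≤ ∫ y, M * |a y| ∂μ := norm_integral_le_of_norm_le (ha.abs.const_mul M) (.of_forall hga)
    _ = M * ∫ y, |a y| ∂μ := integral_const_mul M _

theorem integral_sub_const_mul_of_integral_eq_zero [MeasurableSpace X] {μ : Measure X}
    {a g : X → ℝ} (ha : Integrable a μ) (h0 : ∫ y, a y ∂μ = 0) (c : ℝ) :
    ∫ y, (g y - c) * a y ∂μ = ∫ y, g y * a y ∂μ := by
  simp_rw [sub_mul]
  by_cases hg : Integrable (fun y => g y * a y) μ
  · rw [integral_sub hg (ha.const_mul c), integral_const_mul, h0, mul_zero, sub_zero]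
  · rw [integral_undef hg, integral_undef fun h => hg ?_]
    exact (h.add (ha.const_mul c)).congr (.of_forall fun y => by simp)

theorem compl_hball_subset_iUnion_diff (d : X → X → ℝ) (x₀ : X) {R : ℝ} (hR : 0 < R) :
    (hball d x₀ R)ᶜ ⊆ ⋃ k : ℕ, hball d x₀ (2 ^ (k + 1) * R) \ hball d x₀ (2 ^ k * R) := by
  intro x hx
  have h1 : 1 ≤ d x₀ x / R := by
    rw [one_le_div hR]; exact not_lt.mp hx
  obtain ⟨k, hk, hk1⟩ := exists_nat_pow_near h1 one_lt_two
  refine Set.mem_iUnion.mpr ⟨k, ?_, ?_⟩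
  · exact (div_lt_iff₀ hR).mp hk1
  · exact not_lt.mpr ((le_div_iff₀ hR).mp hk)

theorem pos_and_sub_pos_of_div_add_lt {γ m p : ℝ} (hγ : 0 < γ) (hm : 0 < m)
    (hp : γ / (γ + m) < p) : 0 < p ∧ 0 < m * p - γ * (1 - p) := by
  refine ⟨(div_pos hγ (by linarith)).trans hp, ?_⟩
  rw [div_lt_iff₀ (by linarith)] at hp
  linarith

-- One dyadic annulus: `q = 2^k`, `v = μ(2^k B*)`, `v' = μ(2^(k+1) B*)`, `b = μ(B)`, `I = ‖a‖₁`.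
theorem rpow_decay_mul_le {κ q m γ p b v v' I A A' : ℝ} (hκ : 0 ≤ κ) (hq : 0 < q)
    (hp : 0 < p) (hp1 : p ≤ 1) (hb : 0 < b) (hv : 0 < v) (hI : 0 ≤ I)
    (hIb : I ≤ b ^ (1 - 1 / p)) (hA : 0 ≤ A) (hA' : 0 ≤ A') (hv' : v' ≤ A' * v)
    (hvb : v ≤ A * q ^ γ * b) :
    (κ * q ^ (-m) * v⁻¹ * I) ^ p * v'
      ≤ κ ^ p * A' * A ^ (1 - p) * q ^ (-(m * p - γ * (1 - p))) := by
  have hIp : I ^ p ≤ b ^ (p - 1) := by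
    calc I ^ p ≤ (b ^ (1 - 1 / p)) ^ p := by gcongr
      _ = b ^ (p - 1) := by rw [← Real.rpow_mul hb.le]; field_simp
  have hvp : v ^ (1 - p) ≤ A ^ (1 - p) * q ^ (γ * (1 - p)) * b ^ (1 - p) := by
    calc v ^ (1 - p) ≤ (A * q ^ γ * b) ^ (1 - p) := by gcongr
      _ = _ := by
        rw [Real.mul_rpow (by positivity) hb.le, Real.mul_rpow hA (by positivity),
          ← Real.rpow_mul hq.le]
  calc (κ * q ^ (-m) * v⁻¹ * I) ^ p * v'
      ≤ (κ * q ^ (-m) * v⁻¹ * I) ^ p * (A' * v) := by gcongr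
    _ = κ ^ p * A' * q ^ (-m * p) * I ^ p * v ^ (1 - p) := by
      rw [Real.mul_rpow (by positivity) hI, Real.mul_rpow (by positivity) (by positivity),
        Real.mul_rpow hκ (by positivity), ← Real.rpow_mul hq.le, Real.inv_rpow hv.le,
        Real.rpow_sub hv, Real.rpow_one]
      field_simp
    _ ≤ κ ^ p * A' * q ^ (-m * p) * b ^ (p - 1)
          * (A ^ (1 - p) * q ^ (γ * (1 - p)) * b ^ (1 - p)) := by gcongr
    _ = κ ^ p * A' * A ^ (1 - p) * (q ^ (-m * p) * q ^ (γ * (1 - p)))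
          * (b ^ (p - 1) * b ^ (1 - p)) := by ring
    _ = κ ^ p * A' * A ^ (1 - p) * q ^ (-(m * p - γ * (1 - p))) := by
      rw [← Real.rpow_add hq, ← Real.rpow_add hb, sub_add_sub_cancel, sub_self, Real.rpow_zero,
        mul_one]
      ring_nf

structure IsInhomCZKernel [MeasurableSpace X] (d : X → X → ℝ) (μ : Measure X)
    (A₀ ν s C₁ C₂ : ℝ) (K : X → X → ℝ) : Prop where
  abs_le : ∀ x y, x ≠ y → |K x y| ≤
    C₁ * min ((μ (hball d x (d x y))).toReal⁻¹)
      ((μ (hball d x (d x y))).toReal⁻¹ * d x y ^ (-ν))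
  abs_sub_le : ∀ x y z, 2 * A₀ * d y z ≤ d x z → x ≠ z →
    |K x y - K x z| ≤ C₂ * (d y z / d x z) ^ s * (μ (hball d x (d x z))).toReal⁻¹

structure IsLocalAtom [MeasurableSpace X] (d : X → X → ℝ) (μ : Measure X) (p T : ℝ) (x₀ : X)
    (r : ℝ) (a : X → ℝ) : Prop where
  radius_pos : 0 < r
  support_subset : ∀ x, a x ≠ 0 → x ∈ hball d x₀ r
  eLpNorm_two_le : eLpNorm a 2 μ ≤ μ (hball d x₀ r) ^ ((1 : ℝ) / 2 - 1 / p)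
  integrable : Integrable a μ
  integral_eq_zero : r < T → ∫ x, a x ∂μ = 0

section

variable [MeasurableSpace X] {d : X → X → ℝ} {μ : Measure X} {A₀ A' γ : ℝ}

namespace IsHomType

theorem toReal_measure_hball_pos (hX : IsHomType d μ A₀ A' γ) (x : X) {r : ℝ} (hr : 0 < r) :
    0 < (μ (hball d x r)).toReal :=
  ENNReal.toReal_pos (hX.pos x r hr).ne' ((hX.fin x r).ne)

theorem toReal_measure_hball_mul_le (hX : IsHomType d μ A₀ A' γ) (x : X) (r : ℝ) {c : ℝ}
    (hc : 1 ≤ c) :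
    (μ (hball d x (c * r))).toReal ≤ A' * c ^ γ * (μ (hball d x r)).toReal := by
  have h := ENNReal.toReal_mono (mul_ne_top ofReal_ne_top ((hX.fin x r).ne))
    (hX.doubling x r c hc)
  rwa [toReal_mul, toReal_ofReal (by have := hX.A'_pos; positivity)] at h

theorem hball_subset_hball_of_le_dist (hX : IsHomType d μ A₀ A' γ) {x₀ x : X} {r : ℝ}
    (hr : r ≤ d x₀ x) : hball d x₀ r ⊆ hball d x (2 * A₀ * d x₀ x) := by
  intro z hz
  have hz : d x₀ z < r := hz
  have htri := hX.tri x z x₀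
  rw [hX.symm x x₀] at htri
  show d x z < 2 * A₀ * d x₀ x
  nlinarith [hX.A0_ge]

theorem notMem_hball_of_mul_le_dist (hX : IsHomType d μ A₀ A' γ) {x₀ x : X} {r c : ℝ}
    (hr : 0 < r) (hc : 1 ≤ c) (hx : c * (2 * A₀ * r) ≤ d x₀ x) : x ∉ hball d x₀ r := by
  have hA₀ := hX.A0_ge
  have hr' : r ≤ c * (2 * A₀ * r) := by
    nlinarith [mul_le_mul_of_nonneg_right hc (by positivity : (0 : ℝ) ≤ 2 * A₀ * r)]
  exact fun hxr => (show d x₀ x < r from hxr).not_ge (hr'.trans hx)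

theorem inv_toReal_measure_hball_le (hX : IsHomType d μ A₀ A' γ) {x₀ x : X} {r ρ : ℝ}
    (hr : 0 < r) (hrx : r ≤ d x₀ x) (hxρ : d x₀ x ≤ 2 * A₀ * ρ) :
    (μ (hball d x ρ)).toReal⁻¹ ≤ A' * (2 * A₀ * (2 * A₀)) ^ γ * (μ (hball d x₀ r)).toReal⁻¹ := by
  have hA₀ := hX.A0_ge
  have hρ : 0 < ρ := by nlinarith
  have hsub : hball d x₀ r ⊆ hball d x (2 * A₀ * (2 * A₀) * ρ) :=
    (hX.hball_subset_hball_of_le_dist hrx).trans fun z hz =>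
      show d x z < _ from (lt_of_lt_of_le hz (by nlinarith))
  have hle : (μ (hball d x₀ r)).toReal ≤ A' * (2 * A₀ * (2 * A₀)) ^ γ * (μ (hball d x ρ)).toReal :=
    (ENNReal.toReal_mono ((hX.fin _ _).ne) (measure_mono hsub)).trans
      (hX.toReal_measure_hball_mul_le x ρ (by nlinarith))
  rw [← div_eq_mul_inv, le_div_iff₀ (hX.toReal_measure_hball_pos x₀ hr), inv_mul_le_iff₀
    (hX.toReal_measure_hball_pos x hρ), mul_comm]
  exact hle

end IsHomType

theorem IsLocalAtom.integral_abs_le {p T : ℝ} {x₀ : X} {r : ℝ} {a : X → ℝ}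
    (ha : IsLocalAtom d μ p T x₀ r a) (hX : IsHomType d μ A₀ A' γ) :
    ∫ y, |a y| ∂μ ≤ (μ (hball d x₀ r)).toReal ^ (1 - 1 / p) := by
  have hB0 := hX.pos x₀ r ha.radius_pos
  have hBtop := (hX.fin x₀ r).ne
  have hL1 : eLpNorm a 1 μ ≤ μ (hball d x₀ r) ^ (1 - 1 / p) :=
    calc eLpNorm a 1 μ ≤ eLpNorm a 2 μ * μ (hball d x₀ r) ^ (1 / 2 : ℝ) :=
          eLpNorm_one_le_eLpNorm_two_mul ha.integrable.aestronglyMeasurable ha.support_subset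
      _ ≤ μ (hball d x₀ r) ^ ((1 : ℝ) / 2 - 1 / p) * μ (hball d x₀ r) ^ (1 / 2 : ℝ) := by
          gcongr; exact ha.eLpNorm_two_le
      _ = μ (hball d x₀ r) ^ (1 - 1 / p) := by
          rw [← ENNReal.rpow_add _ _ hB0.ne' hBtop]; ring_nf
  simp_rw [← Real.norm_eq_abs]
  rw [integral_norm_eq_lintegral_enorm ha.integrable.aestronglyMeasurable,
    ← eLpNorm_one_eq_lintegral_enorm, ENNReal.toReal_rpow]
  exact ENNReal.toReal_mono (rpow_ne_top_of_nonneg' hB0 hBtop) hL1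

namespace IsInhomCZKernel

variable {ν s C₁ C₂ : ℝ} {K : X → X → ℝ}

theorem abs_le_of_far (hK : IsInhomCZKernel d μ A₀ ν s C₁ C₂ K) (hX : IsHomType d μ A₀ A' γ)
    (hC₁ : 0 ≤ C₁) (hν : 0 ≤ ν) {x₀ x y : X} {r T c : ℝ} (hT : 0 < T) (hTr : T ≤ r)
    (hc : 1 ≤ c) (hy : d x₀ y < r) (hx : c * (2 * A₀ * r) ≤ d x₀ x) :
    |K x y| ≤ C₁ * T ^ (-ν) * (A' * (2 * A₀ * (2 * A₀)) ^ γ) * c ^ (-ν)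
      * (μ (hball d x₀ (c * (2 * A₀ * r)))).toReal⁻¹ := by
  have hA₀ := hX.A0_ge
  have hA' := hX.A'_pos
  have hr : 0 < r := hT.trans_le hTr
  have hc0 : 0 < c := by linarith
  have htri := hX.tri x₀ x y
  rw [hX.symm y x] at htri
  have hfar : d x₀ x ≤ 2 * A₀ * d x y := by
    nlinarith [mul_le_mul_of_nonneg_left hc (by positivity : 0 ≤ A₀ * r)]
  have hcr : c * r ≤ d x y := by nlinarith
  have hxy : 0 < d x y := lt_of_lt_of_le (by positivity) hcr
  have hdν : d x y ^ (-ν) ≤ c ^ (-ν) * T ^ (-ν) := by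
    rw [← Real.mul_rpow (by positivity) hT.le]
    exact Real.rpow_le_rpow_of_nonpos (by positivity) (by nlinarith) (by linarith)
  have hV := hX.inv_toReal_measure_hball_le (by positivity) hx hfar
  calc |K x y| ≤ C₁ * ((μ (hball d x (d x y))).toReal⁻¹ * d x y ^ (-ν)) :=
        (hK.abs_le x y fun h => hxy.ne' (by rw [(hX.eq_zero x y).mpr h])).trans
          (by gcongr; exact min_le_right _ _)
    _ ≤ C₁ * ((A' * (2 * A₀ * (2 * A₀)) ^ γ * (μ (hball d x₀ (c * (2 * A₀ * r)))).toReal⁻¹)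
          * (c ^ (-ν) * T ^ (-ν))) := by
      gcongr
    _ = _ := by ring

theorem abs_sub_le_of_far (hK : IsInhomCZKernel d μ A₀ ν s C₁ C₂ K)
    (hX : IsHomType d μ A₀ A' γ) (hC₂ : 0 ≤ C₂) (hs : 0 ≤ s) {x₀ x y : X} {r c : ℝ}
    (hr : 0 < r) (hc : 1 ≤ c) (hy : d x₀ y < r) (hx : c * (2 * A₀ * r) ≤ d x₀ x) :
    |K x y - K x x₀| ≤ C₂ * (A' * (2 * A₀ * (2 * A₀)) ^ γ) * c ^ (-s)
      * (μ (hball d x₀ (c * (2 * A₀ * r)))).toReal⁻¹ := by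
  have hA₀ := hX.A0_ge
  have hA' := hX.A'_pos
  have hc0 : 0 < c := by linarith
  rw [hX.symm x₀ y] at hy
  rw [hX.symm x₀ x] at hx
  have h2A₀r : r ≤ 2 * A₀ * r := by nlinarith
  have hcr : c * r ≤ d x x₀ := le_trans (mul_le_mul_of_nonneg_left h2A₀r hc0.le) hx
  have hyx : 2 * A₀ * d y x₀ ≤ d x x₀ := by
    nlinarith [mul_le_mul_of_nonneg_right hc (by linarith : 0 ≤ 2 * A₀ * r),
      mul_lt_mul_of_pos_left hy (by linarith : (0 : ℝ) < 2 * A₀)]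
  have hx0 : 0 < d x x₀ := lt_of_lt_of_le (by positivity) hcr
  have hratio : (d y x₀ / d x x₀) ^ s ≤ c ^ (-s) := by
    rw [Real.rpow_neg hc0.le, ← Real.inv_rpow hc0.le]
    gcongr
    · exact div_nonneg (hX.nonneg y x₀) hx0.le
    · rw [div_le_iff₀ hx0, ← div_eq_inv_mul, le_div_iff₀ hc0]
      nlinarith
  have hV := hX.inv_toReal_measure_hball_le (r := c * (2 * A₀ * r)) (ρ := d x x₀)
    (by positivity) (by rwa [hX.symm x₀ x]) (by rw [hX.symm x₀ x]; nlinarith)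
  calc |K x y - K x x₀|
      ≤ C₂ * (d y x₀ / d x x₀) ^ s * (μ (hball d x (d x x₀))).toReal⁻¹ :=
        hK.abs_sub_le x y x₀ hyx fun h => hx0.ne' ((hX.eq_zero x x₀).mpr h)
    _ ≤ C₂ * c ^ (-s) * (A' * (2 * A₀ * (2 * A₀)) ^ γ
          * (μ (hball d x₀ (c * (2 * A₀ * r)))).toReal⁻¹) := by gcongr
    _ = _ := by ring

theorem abs_integral_mul_le (hK : IsInhomCZKernel d μ A₀ ν s C₁ C₂ K)
    (hX : IsHomType d μ A₀ A' γ) (hC₁ : 0 ≤ C₁) (hC₂ : 0 ≤ C₂) (hν : 0 ≤ ν) (hs : 0 ≤ s)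
    {p T : ℝ} (hT : 0 < T) {x₀ : X} {r : ℝ} {a : X → ℝ} (ha : IsLocalAtom d μ p T x₀ r a)
    {c : ℝ} (hc : 1 ≤ c) {x : X} (hx : c * (2 * A₀ * r) ≤ d x₀ x) :
    |∫ y, K x y * a y ∂μ| ≤ (C₂ + C₁ * T ^ (-ν)) * (A' * (2 * A₀ * (2 * A₀)) ^ γ)
      * c ^ (-min ν s) * (μ (hball d x₀ (c * (2 * A₀ * r)))).toReal⁻¹ * ∫ y, |a y| ∂μ := by
  have hTν : 0 ≤ C₁ * T ^ (-ν) := mul_nonneg hC₁ (Real.rpow_nonneg hT.le _)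
  have hL : 0 ≤ A' * (2 * A₀ * (2 * A₀)) ^ γ := by
    have := hX.A'_pos; have := hX.A0_ge; positivity
  have hκ : 0 ≤ (C₂ + C₁ * T ^ (-ν)) * (A' * (2 * A₀ * (2 * A₀)) ^ γ) :=
    mul_nonneg (by linarith) hL
  rcases lt_or_ge r T with hrT | hTr
  · rw [← integral_sub_const_mul_of_integral_eq_zero ha.integrable (ha.integral_eq_zero hrT)
      (K x x₀)]
    refine abs_integral_mul_le_of_abs_le ha.integrable fun y hy =>
      (hK.abs_sub_le_of_far hX hC₂ hs ha.radius_pos hc (ha.support_subset y hy) hx).trans ?_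
    gcongr ?_ * _ * ?_ * _
    · linarith
    · exact Real.rpow_le_rpow_of_exponent_le hc (neg_le_neg (min_le_right ν s))
  · refine abs_integral_mul_le_of_abs_le ha.integrable fun y hy =>
      (hK.abs_le_of_far hX hC₁ hν hT hTr hc (ha.support_subset y hy) hx).trans ?_
    gcongr ?_ * _ * ?_ * _
    · linarith
    · exact Real.rpow_le_rpow_of_exponent_le hc (neg_le_neg (min_le_left ν s))

end IsInhomCZKernel

namespace IsHomType

theorem lintegral_annulus_le_of_decay (hX : IsHomType d μ A₀ A' γ) {x₀ : X} {r : ℝ}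
    (hr : 0 < r) {f : X → ℝ} {κ m p I : ℝ} (hκ : 0 ≤ κ) (hp : 0 < p) (hp1 : p ≤ 1)
    (hI : 0 ≤ I) (hIb : I ≤ (μ (hball d x₀ r)).toReal ^ (1 - 1 / p))
    (hf : ∀ c, 1 ≤ c → ∀ x, c * (2 * A₀ * r) ≤ d x₀ x →
      |f x| ≤ κ * c ^ (-m) * (μ (hball d x₀ (c * (2 * A₀ * r)))).toReal⁻¹ * I) (k : ℕ) :
    ∫⁻ x in hball d x₀ (2 ^ (k + 1) * (2 * A₀ * r)) \ hball d x₀ (2 ^ k * (2 * A₀ * r)),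
        ‖f x‖ₑ ^ p ∂μ
      ≤ ENNReal.ofReal (κ ^ p * (A' * 2 ^ γ) * (A' * (2 * A₀) ^ γ) ^ (1 - p)
          * (2 ^ (-(m * p - γ * (1 - p)))) ^ k) := by
  have hA₀ := hX.A0_ge
  have hA' := hX.A'_pos
  set R := 2 * A₀ * r
  have hR : 0 < R := by positivity
  have h2k : (1 : ℝ) ≤ 2 ^ k := one_le_pow₀ one_le_two
  set M := κ * (2 ^ k : ℝ) ^ (-m) * (μ (hball d x₀ (2 ^ k * R))).toReal⁻¹ * I
  have hpt : ∀ x ∈ hball d x₀ (2 ^ (k + 1) * R) \ hball d x₀ (2 ^ k * R),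
      ‖f x‖ₑ ^ p ≤ ENNReal.ofReal (M ^ p) := fun x hx => by
    rw [Real.enorm_eq_ofReal_abs, ENNReal.ofReal_rpow_of_nonneg (abs_nonneg _) hp.le]
    gcongr
    exact hf _ h2k x (not_lt.mp hx.2)
  have hvol : (μ (hball d x₀ (2 ^ (k + 1) * R))).toReal
      ≤ A' * 2 ^ γ * (μ (hball d x₀ (2 ^ k * R))).toReal := by
    rw [pow_succ, mul_comm _ (2 : ℝ), mul_assoc]
    exact hX.toReal_measure_hball_mul_le x₀ _ one_le_two
  have hvol' : (μ (hball d x₀ (2 ^ k * R))).toReal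
      ≤ A' * (2 * A₀) ^ γ * (2 ^ k : ℝ) ^ γ * (μ (hball d x₀ r)).toReal := by
    calc (μ (hball d x₀ (2 ^ k * R))).toReal
        = (μ (hball d x₀ (2 ^ k * (2 * A₀) * r))).toReal := by rw [mul_assoc]
      _ ≤ A' * (2 ^ k * (2 * A₀)) ^ γ * (μ (hball d x₀ r)).toReal :=
        hX.toReal_measure_hball_mul_le x₀ r (by nlinarith)
      _ = _ := by rw [Real.mul_rpow (by positivity) (by positivity)]; ring
  have hM := rpow_decay_mul_le (m := m) hκ (pow_pos two_pos k) hp hp1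
    (hX.toReal_measure_hball_pos x₀ hr) (hX.toReal_measure_hball_pos x₀ (by positivity)) hI hIb
    (by positivity) (by positivity) hvol hvol'
  calc ∫⁻ x in hball d x₀ (2 ^ (k + 1) * R) \ hball d x₀ (2 ^ k * R), ‖f x‖ₑ ^ p ∂μ
      ≤ ENNReal.ofReal (M ^ p) * μ (hball d x₀ (2 ^ (k + 1) * R)) := by
        refine (setLIntegral_mono measurable_const hpt).trans ?_
        rw [setLIntegral_const]
        gcongr
        exact Set.sdiff_subset
    _ = ENNReal.ofReal (M ^ p * (μ (hball d x₀ (2 ^ (k + 1) * R))).toReal) := by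
        rw [ENNReal.ofReal_mul (by positivity), ENNReal.ofReal_toReal
          ((hX.fin _ _).ne)]
    _ ≤ _ := by
        refine ENNReal.ofReal_le_ofReal (hM.trans_eq ?_)
        rw [← Real.rpow_natCast, ← Real.rpow_natCast, ← Real.rpow_mul two_pos.le,
          ← Real.rpow_mul two_pos.le, mul_comm (k : ℝ)]

theorem lintegral_compl_hball_le_of_decay (hX : IsHomType d μ A₀ A' γ) {x₀ : X} {r : ℝ}
    (hr : 0 < r) {f : X → ℝ} {κ m p I : ℝ} (hκ : 0 ≤ κ) (hp : 0 < p) (hp1 : p ≤ 1)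
    (hε : 0 < m * p - γ * (1 - p)) (hI : 0 ≤ I)
    (hIb : I ≤ (μ (hball d x₀ r)).toReal ^ (1 - 1 / p))
    (hf : ∀ c, 1 ≤ c → ∀ x, c * (2 * A₀ * r) ≤ d x₀ x →
      |f x| ≤ κ * c ^ (-m) * (μ (hball d x₀ (c * (2 * A₀ * r)))).toReal⁻¹ * I) :
    ∫⁻ x in (hball d x₀ (2 * A₀ * r))ᶜ, ‖f x‖ₑ ^ p ∂μ
      ≤ ENNReal.ofReal (κ ^ p * (A' * 2 ^ γ) * (A' * (2 * A₀) ^ γ) ^ (1 - p)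
          * (1 - 2 ^ (-(m * p - γ * (1 - p))))⁻¹) := by
  have hA₀ := hX.A0_ge
  have hA' := hX.A'_pos
  set D := κ ^ p * (A' * 2 ^ γ) * (A' * (2 * A₀) ^ γ) ^ (1 - p)
  set ρ : ℝ := 2 ^ (-(m * p - γ * (1 - p)))
  have hD : 0 ≤ D := by positivity
  have hρ : 0 ≤ ρ := by positivity
  have hρ1 : ρ < 1 := Real.rpow_lt_one_of_one_lt_of_neg one_lt_two (by linarith)
  calc ∫⁻ x in (hball d x₀ (2 * A₀ * r))ᶜ, ‖f x‖ₑ ^ p ∂μ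
      ≤ ∫⁻ x in ⋃ k : ℕ, hball d x₀ (2 ^ (k + 1) * (2 * A₀ * r))
          \ hball d x₀ (2 ^ k * (2 * A₀ * r)), ‖f x‖ₑ ^ p ∂μ :=
        lintegral_mono_set (compl_hball_subset_iUnion_diff d x₀ (by positivity))
    _ ≤ ∑' k : ℕ, ∫⁻ x in hball d x₀ (2 ^ (k + 1) * (2 * A₀ * r))
          \ hball d x₀ (2 ^ k * (2 * A₀ * r)), ‖f x‖ₑ ^ p ∂μ := lintegral_iUnion_le _ _
    _ ≤ ∑' k : ℕ, ENNReal.ofReal D * ENNReal.ofReal ρ ^ k := ENNReal.tsum_le_tsum fun k =>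
        (hX.lintegral_annulus_le_of_decay hr hκ hp hp1 hI hIb hf k).trans_eq
          (by rw [ENNReal.ofReal_mul hD, ENNReal.ofReal_pow hρ])
    _ = ENNReal.ofReal (D * (1 - ρ)⁻¹) := by
        rw [ENNReal.tsum_mul_left, ENNReal.tsum_geometric, ENNReal.ofReal_mul hD,
          ENNReal.ofReal_inv_of_pos (by linarith), ENNReal.ofReal_sub 1 hρ, ENNReal.ofReal_one]

theorem lintegral_hball_le_of_eLpNorm_two_le (hX : IsHomType d μ A₀ A' γ) {x₀ : X} {r : ℝ}
    (hr : 0 < r) {a g : X → ℝ} {p N : ℝ} (hp : 0 < p) (hp2 : p < 2) (hN : 0 ≤ N)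
    (ha : eLpNorm a 2 μ ≤ μ (hball d x₀ r) ^ ((1 : ℝ) / 2 - 1 / p))
    (hg : eLpNorm g 2 μ ≤ ENNReal.ofReal N * eLpNorm a 2 μ) :
    ∫⁻ x in hball d x₀ (2 * A₀ * r), ‖g x‖ₑ ^ p ∂μ
      ≤ ENNReal.ofReal (N ^ p * (A' * (2 * A₀) ^ γ) ^ (1 - p / 2)) := by
  have hA₀ := hX.A0_ge
  have hA' := hX.A'_pos
  have hB0 := (hX.pos x₀ r hr).ne'
  have hBtop := (hX.fin x₀ r).ne
  have hexp : 0 ≤ 1 - p / 2 := by linarith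
  calc ∫⁻ x in hball d x₀ (2 * A₀ * r), ‖g x‖ₑ ^ p ∂μ
      ≤ eLpNorm g 2 μ ^ p * μ (hball d x₀ (2 * A₀ * r)) ^ (1 - p / 2) :=
        lintegral_enorm_rpow_le_eLpNorm_two_mul μ g _ hp hp2
    _ ≤ (ENNReal.ofReal N * μ (hball d x₀ r) ^ ((1 : ℝ) / 2 - 1 / p)) ^ p
          * (ENNReal.ofReal (A' * (2 * A₀) ^ γ) * μ (hball d x₀ r)) ^ (1 - p / 2) := by
        gcongr
        · exact hg.trans (by gcongr)
        · exact hX.doubling x₀ r (2 * A₀) (by linarith)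
    _ = ENNReal.ofReal (N ^ p * (A' * (2 * A₀) ^ γ) ^ (1 - p / 2)) := by
        rw [ENNReal.mul_rpow_of_nonneg _ _ hp.le, ENNReal.mul_rpow_of_nonneg _ _ hexp,
          ← ENNReal.rpow_mul, ENNReal.ofReal_rpow_of_nonneg hN hp.le,
          ENNReal.ofReal_rpow_of_nonneg (by positivity) hexp, mul_mul_mul_comm,
          ← ENNReal.rpow_add _ _ hB0 hBtop, ← ENNReal.ofReal_mul (by positivity)]
        convert mul_one _
        rw [← ENNReal.rpow_zero (x := μ (hball d x₀ r))]
        congr 1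
        field_simp
        ring

end IsHomType

end

/-- Uniform `L^p` bound for images of local `(p,2)`-atoms under an inhomogeneous
Calderón–Zygmund operator of order `(ν,s)`. -/
theorem stmt16 [MeasurableSpace X] (d : X → X → ℝ) (μ : Measure X) (A₀ A' γ : ℝ)
    (hX : IsHomType d μ A₀ A' γ) (ν s : ℝ) (hν : 0 < ν) (hs : 0 < s)
    (p : ℝ) (hp : γ / (γ + min ν s) < p) (hp1 : p ≤ 1) (T : ℝ) (hT : 0 < T)
    (K : X → X → ℝ) (C₁ C₂ : ℝ) (hC₁ : 0 < C₁) (hC₂ : 0 < C₂)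
    (hK : ∀ x y, x ≠ y → |K x y| ≤
      C₁ * min ((μ (hball d x (d x y))).toReal⁻¹)
        ((μ (hball d x (d x y))).toReal⁻¹ * d x y ^ (-ν)))
    (hKreg : ∀ x y z, 2 * A₀ * d y z ≤ d x z → x ≠ z →
      |K x y - K x z| ≤ C₂ * (d y z / d x z) ^ s * (μ (hball d x (d x z))).toReal⁻¹)
    (NR : ℝ) (hNR : 0 ≤ NR) :
    ∃ C : ℝ, 0 < C ∧
      ∀ (a Ra : X → ℝ) (x_B : X) (r_B : ℝ), 0 < r_B →
        (∀ x, a x ≠ 0 → x ∈ hball d x_B r_B) →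
        eLpNorm a 2 μ ≤ μ (hball d x_B r_B) ^ ((1:ℝ)/2 - 1/p) →
        Integrable a μ → (r_B < T → (∫ x, a x ∂μ) = 0) →
        (∀ x, x ∉ hball d x_B r_B → Ra x = ∫ y, K x y * a y ∂μ) →
        eLpNorm Ra 2 μ ≤ ENNReal.ofReal NR * eLpNorm a 2 μ →
        eLpNorm Ra (ENNReal.ofReal p) μ ≤ ENNReal.ofReal C := by
  have hA₀ := hX.A0_ge
  have hA' := hX.A'_pos
  obtain ⟨hp0, hε⟩ := pos_and_sub_pos_of_div_add_lt hX.gamma_pos (lt_min hν hs) hp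
  have hρ : 0 < 1 - (2 : ℝ) ^ (-(min ν s * p - γ * (1 - p))) :=
    sub_pos.mpr (Real.rpow_lt_one_of_one_lt_of_neg one_lt_two (by linarith))
  set κ := (C₂ + C₁ * T ^ (-ν)) * (A' * (2 * A₀ * (2 * A₀)) ^ γ)
  have hκ : 0 < κ := by positivity
  set D₀ := NR ^ p * (A' * (2 * A₀) ^ γ) ^ (1 - p / 2)
  set D₁ := κ ^ p * (A' * 2 ^ γ) * (A' * (2 * A₀) ^ γ) ^ (1 - p)
    * (1 - 2 ^ (-(min ν s * p - γ * (1 - p))))⁻¹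
  have hD₀ : 0 ≤ D₀ := by positivity
  have hD₁ : 0 < D₁ := by positivity
  refine ⟨(D₀ + D₁) ^ (1 / p), by positivity, ?_⟩
  intro a Ra x_B r_B hrB hsupp ha2 haInt hcanc hRaDef hRa2
  have ha : IsLocalAtom d μ p T x_B r_B a := ⟨hrB, hsupp, ha2, haInt, hcanc⟩
  have hdecay : ∀ c, 1 ≤ c → ∀ x, c * (2 * A₀ * r_B) ≤ d x_B x →
      |Ra x| ≤ κ * c ^ (-min ν s) * (μ (hball d x_B (c * (2 * A₀ * r_B)))).toReal⁻¹
        * ∫ y, |a y| ∂μ := fun c hc x hx => by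
    rw [hRaDef x (hX.notMem_hball_of_mul_le_dist hrB hc hx)]
    exact IsInhomCZKernel.abs_integral_mul_le ⟨hK, hKreg⟩ hX hC₁.le hC₂.le hν.le hs.le hT ha hc hx
  have htotal : ∫⁻ x, ‖Ra x‖ₑ ^ p ∂μ ≤ ENNReal.ofReal (D₀ + D₁) := by
    rw [← lintegral_add_compl _ (hX.meas x_B (2 * A₀ * r_B)), ENNReal.ofReal_add hD₀ hD₁.le]
    exact add_le_add (hX.lintegral_hball_le_of_eLpNorm_two_le hrB hp0 (by linarith) hNR ha2 hRa2)
      (hX.lintegral_compl_hball_le_of_decay hrB hκ.le hp0 hp1 hε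
        (integral_nonneg fun y => abs_nonneg (a y)) (ha.integral_abs_le hX) hdecay)
  rw [eLpNorm_eq_lintegral_rpow_enorm_toReal (by simpa using hp0) ofReal_ne_top,
    toReal_ofReal hp0.le, ← ENNReal.ofReal_rpow_of_pos (by positivity)]
  gcongr
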